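/- arXiv:2410.20462 — 2 statements merged into one kernel-verified Lean document; each statement's English description precedes it below -/
import Mathlib

section
/- Let T be a tree and k ≥ 2 an integer. Let x be a support vertex of T of degree k+1 that is adjacent to k leaves u_1, …, u_k and to a non-leaf vertex t, and suppose t is adjacent to a leaf y. Let T' be the tree obtained from T by deleting the edge xt and adding the new edge xy. Then Φ(T) ≤ Φ(T'). -/
/-- A dissociation set: the induced subgraph has maximum degree at most 1. -/
def SimpleGraph.IsDissocSet {V : Type*} (G : SimpleGraph V) (S : Finset V) : Prop :=
  ∀ a ∈ S, ∀ b ∈ S, ∀ c ∈ S, G.Adj a b → G.Adj a c → b = c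

/-- A maximal dissociation set. -/
def SimpleGraph.IsMaxDissocSet {V : Type*} (G : SimpleGraph V) (S : Finset V) : Prop :=
  G.IsDissocSet S ∧ ∀ T : Finset V, G.IsDissocSet T → S ⊆ T → S = T

/-- `G.phi` is the number of maximal dissociation sets of `G`. -/
noncomputable def SimpleGraph.phi {V : Type*} (G : SimpleGraph V) : ℕ :=
  Set.ncard {S : Finset V | G.IsMaxDissocSet S}

/-- Disjoint union of `k` copies of `G`. -/
def SimpleGraph.copies {V : Type*} (k : ℕ) (G : SimpleGraph V) :
    SimpleGraph (Fin k × V) where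
  Adj a b := a.1 = b.1 ∧ G.Adj a.2 b.2
  symm := ⟨fun a b h => ⟨h.1.symm, h.2.symm⟩⟩
  loopless := ⟨fun a h => G.loopless.irrefl a.2 h.2⟩

/-- `TstarTree k` is the tree `T*_{3k+1}`: `k` copies of `P₃` plus a new vertex joined to
the middle vertex of each copy. -/
def TstarTree (k : ℕ) : SimpleGraph (Option (Fin k × Fin 3)) :=
  SimpleGraph.fromRel (fun a b =>
    (∃ i, a = some (i, 1) ∧ (b = some (i, 0) ∨ b = some (i, 2))) ∨
    (∃ i, a = none ∧ b = some (i, 1)))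

/-- `T*₈`: two copies of `K_{1,3}` (centers 0 and 4) with an edge between leaves 3 and 5. -/
def Tstar8 : SimpleGraph (Fin 8) :=
  SimpleGraph.fromRel (fun a b =>
    ((a : ℕ), (b : ℕ)) ∈ [(0,1), (0,2), (0,3), (4,5), (4,6), (4,7), (3,5)])

/-- `T*₉`: two copies of `K_{1,3}` (centers 0 and 4) plus a new vertex 8 joined to
leaves 3 and 5. -/
def Tstar9 : SimpleGraph (Fin 9) :=
  SimpleGraph.fromRel (fun a b =>
    ((a : ℕ), (b : ℕ)) ∈ [(0,1), (0,2), (0,3), (4,5), (4,6), (4,7), (8,3), (8,5)])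

noncomputable def f1 (n : ℕ) : ℕ :=
  if n = 5 then 5
  else if n % 3 = 0 then 3 ^ (n / 3)
  else if n % 3 = 1 then 4 * 3 ^ ((n - 4) / 3)
  else 16 * 3 ^ ((n - 8) / 3)

noncomputable def f2 (n : ℕ) : ℕ :=
  if n = 4 then 3
  else if n = 5 then 4
  else if n = 6 then 6
  else if n = 9 then 20
  else if n % 3 = 1 then 11 * 3 ^ ((n - 7) / 3)
  else if n % 3 = 2 then 15 * 3 ^ ((n - 8) / 3)
  else 64 * 3 ^ ((n - 12) / 3)

set_option linter.unusedSectionVars false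
namespace DissocHelper
variable {V : Type*} [Fintype V] [DecidableEq V] (G : SimpleGraph V)

lemma dissoc_subset {S W : Finset V} (h : G.IsDissocSet W) (hsub : S ⊆ W) : G.IsDissocSet S :=
  fun a ha b hb c hc hab hac => h a (hsub ha) b (hsub hb) c (hsub hc) hab hac

lemma blocked_of_max {S : Finset V} (h : G.IsMaxDissocSet S) :
    ∀ v ∉ S, ¬ G.IsDissocSet (insert v S) := by
  intro v hv hd
  have := h.2 _ hd (Finset.subset_insert _ _)
  exact hv (this ▸ Finset.mem_insert_self v S)

lemma max_of_blocked {S : Finset V} (h1 : G.IsDissocSet S)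
    (h2 : ∀ v ∉ S, ¬ G.IsDissocSet (insert v S)) : G.IsMaxDissocSet S := by
  refine ⟨h1, fun W hW hSW => ?_⟩
  by_contra hne
  obtain ⟨v, hvW, hvS⟩ := Finset.exists_of_ssubset (hSW.ssubset_of_ne hne)
  exact h2 v hvS (dissoc_subset G hW (Finset.insert_subset hvW hSW))

lemma viol_of_not_dissoc {W : Finset V} (h : ¬ G.IsDissocSet W) :
    ∃ a ∈ W, ∃ b ∈ W, ∃ c ∈ W, G.Adj a b ∧ G.Adj a c ∧ b ≠ c := by
  unfold SimpleGraph.IsDissocSet at h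
  push_neg at h
  obtain ⟨a, ha, b, hb, c, hc, hab, hac, hbc⟩ := h
  exact ⟨a, ha, b, hb, c, hc, hab, hac, hbc⟩

lemma not_dissoc_of_viol {W : Finset V} {a b c : V} (ha : a ∈ W) (hb : b ∈ W) (hc : c ∈ W)
    (hab : G.Adj a b) (hac : G.Adj a c) (hbc : b ≠ c) : ¬ G.IsDissocSet W :=
  fun h => hbc (h a ha b hb c hc hab hac)

open Classical in
noncomputable def extMax (S : Finset V) : Finset V :=
  if h : ∃ v, v ∉ S ∧ G.IsDissocSet (insert v S) then
    extMax (insert h.choose S)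
  else S
termination_by Fintype.card V - S.card
decreasing_by
  have hv : h.choose ∉ S := h.choose_spec.1
  have h1 : S.card < (insert h.choose S).card := by
    rw [Finset.card_insert_of_notMem hv]; omega
  have h2 : (insert h.choose S).card ≤ Fintype.card V := Finset.card_le_univ _
  omega

lemma extMax_spec_aux (n : ℕ) : ∀ S : Finset V, Fintype.card V - S.card ≤ n →
    S ⊆ extMax G S ∧
    (∀ w ∈ extMax G S, w ∈ S ∨ G.IsDissocSet (insert w S)) ∧
    (G.IsDissocSet S → G.IsDissocSet (extMax G S)) ∧
    (∀ v, v ∉ extMax G S → ¬ G.IsDissocSet (insert v (extMax G S))) := by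
  induction n with
  | zero =>
    intro S hS
    have huniv : S = Finset.univ := by
      apply Finset.eq_univ_of_card
      have := Finset.card_le_univ S
      omega
    have hno : ¬ ∃ v, v ∉ S ∧ G.IsDissocSet (insert v S) := by
      rintro ⟨v, hv, -⟩
      exact hv (huniv ▸ Finset.mem_univ v)
    rw [extMax, dif_neg hno]
    refine ⟨Finset.Subset.refl _, fun w hw => Or.inl hw, fun h => h, ?_⟩
    intro v hv
    exact absurd (huniv ▸ Finset.mem_univ v) hv
  | succ n ih =>
    intro S hS
    rw [extMax]
    split
    · next h =>
      set v := h.choose with hvdef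
      have hv : v ∉ S ∧ G.IsDissocSet (insert v S) := h.choose_spec
      have hcard : Fintype.card V - (insert v S).card ≤ n := by
        have h1 : (insert v S).card = S.card + 1 := Finset.card_insert_of_notMem hv.1
        have h2 : (insert v S).card ≤ Fintype.card V := Finset.card_le_univ _
        omega
      obtain ⟨k1, k2, k3, k4⟩ := ih (insert v S) hcard
      refine ⟨(Finset.subset_insert _ _).trans k1, ?_, fun _ => k3 hv.2, k4⟩
      intro w hw
      rcases k2 w hw with hw' | hw'
      · rcases Finset.mem_insert.mp hw' with rfl | hw''
        · exact Or.inr hv.2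
        · exact Or.inl hw''
      · exact Or.inr (dissoc_subset G hw'
          (Finset.insert_subset_insert _ (Finset.subset_insert _ _)))
    · next h =>
      push_neg at h
      exact ⟨Finset.Subset.refl _, fun w hw => Or.inl hw, fun hd => hd, h⟩

lemma extMax_spec (S : Finset V) :
    S ⊆ extMax G S ∧
    (∀ w ∈ extMax G S, w ∈ S ∨ G.IsDissocSet (insert w S)) ∧
    (G.IsDissocSet S → G.IsDissocSet (extMax G S)) ∧
    (∀ v, v ∉ extMax G S → ¬ G.IsDissocSet (insert v (extMax G S))) :=
  extMax_spec_aux G _ S le_rfl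

end DissocHelper

/-- Lemma 2, weak form: rewiring the edge `xt` to `xy` does not
decrease the number of maximal dissociation sets. -/
theorem phi_le_of_rewire {V : Type*} [Fintype V] [DecidableEq V]
    (T : SimpleGraph V) [DecidableRel T.Adj] (hT : T.IsTree)
    (k : ℕ) (hk : 2 ≤ k) (x t y : V) (u : Fin k → V)
    (hinj : Function.Injective u)
    (hadj : ∀ i, T.Adj x (u i)) (hleaf : ∀ i, T.degree (u i) = 1)
    (hxt : T.Adj x t) (ht : T.degree t ≠ 1) (hdx : T.degree x = k + 1)
    (hty : T.Adj t y) (hy : T.degree y = 1) :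
    T.phi ≤ (T.deleteEdges {s(x, t)} ⊔ SimpleGraph.edge x y).phi := by
  classical
  set T' := T.deleteEdges {s(x, t)} ⊔ SimpleGraph.edge x y with hT'def
  -- unique neighbor of a degree-1 vertex
  have huniqnb : ∀ w z z' : V, T.degree w = 1 → T.Adj w z → T.Adj w z' → z = z' := by
    intro w z z' hdeg hz hz'
    have h1 := (SimpleGraph.mem_neighborFinset T w z).mpr hz
    have h2 := (SimpleGraph.mem_neighborFinset T w z').mpr hz'
    obtain ⟨a, ha⟩ := Finset.card_eq_one.mp hdeg
    rw [ha, Finset.mem_singleton] at h1 h2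
    rw [h1, h2]
  have hxney : x ≠ y := by
    intro h
    rw [h, hy] at hdx
    omega
  have hxnet : x ≠ t := hxt.ne
  have htney : t ≠ y := hty.ne
  have hynbr : ∀ z, T.Adj y z → z = t := fun z hz => huniqnb y z t hy hz hty.symm
  have hunbr : ∀ i z, T.Adj (u i) z → z = x := fun i z hz =>
    huniqnb (u i) z x (hleaf i) hz (hadj i).symm
  have hunex : ∀ i, u i ≠ x := fun i => (hadj i).ne'
  have huney : ∀ i, u i ≠ y := by
    intro i h
    exact hxnet (hynbr x (h ▸ (hadj i)).symm)
  have hunet : ∀ i, u i ≠ t := by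
    intro i h
    exact hxney (hunbr i y (h ▸ hty)).symm
  have hnadjxy : ¬ T.Adj x y := by
    intro h
    exact hxnet (hynbr x h.symm)
  -- x's neighbors are exactly t and the u i
  have hxnbr : ∀ c, T.Adj x c → c = t ∨ ∃ i, c = u i := by
    intro c hc
    have hA : insert t (Finset.image u Finset.univ) ⊆ T.neighborFinset x := by
      intro m hm
      rcases Finset.mem_insert.mp hm with rfl | hm'
      · exact (SimpleGraph.mem_neighborFinset T x m).mpr hxt
      · obtain ⟨i, -, rfl⟩ := Finset.mem_image.mp hm'
        exact (SimpleGraph.mem_neighborFinset T x (u i)).mpr (hadj i)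
    have hcardA : (insert t (Finset.image u Finset.univ)).card = k + 1 := by
      rw [Finset.card_insert_of_notMem, Finset.card_image_of_injective _ hinj]
      · simp
      · intro hmem
        obtain ⟨i, -, hi⟩ := Finset.mem_image.mp hmem
        exact hunet i hi
    have heq : insert t (Finset.image u Finset.univ) = T.neighborFinset x := by
      apply Finset.eq_of_subset_of_card_le hA
      rw [hcardA]
      exact le_of_eq hdx
    have hc' : c ∈ insert t (Finset.image u Finset.univ) := by
      rw [heq]
      exact (SimpleGraph.mem_neighborFinset T x c).mpr hc
    rcases Finset.mem_insert.mp hc' with rfl | hc''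
    · exact Or.inl rfl
    · obtain ⟨i, -, rfl⟩ := Finset.mem_image.mp hc''
      exact Or.inr ⟨i, rfl⟩
  -- T' adjacency
  have hT'adj : ∀ a b, T'.Adj a b ↔
      ((T.Adj a b ∧ ¬(a = x ∧ b = t) ∧ ¬(a = t ∧ b = x)) ∨ ((a = x ∧ b = y) ∨ (a = y ∧ b = x))) := by
    intro a b
    rw [hT'def]
    simp only [SimpleGraph.sup_adj, SimpleGraph.deleteEdges_adj, SimpleGraph.edge_adj,
      Set.mem_singleton_iff, Sym2.eq, Sym2.rel_iff', Prod.mk.injEq, Prod.swap_prod_mk]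
    constructor
    · rintro (⟨hab, hne⟩ | ⟨h1, -⟩)
      · exact Or.inl ⟨hab, fun h => hne (Or.inl h), fun h => hne (Or.inr h)⟩
      · exact Or.inr h1
    · rintro (⟨hab, h1, h2⟩ | h)
      · exact Or.inl ⟨hab, fun h => h.elim h1 h2⟩
      · refine Or.inr ⟨h, ?_⟩
        rcases h with ⟨rfl, rfl⟩ | ⟨rfl, rfl⟩
        · exact hxney
        · exact hxney.symm

  -- derived T' facts
  have hT'xy : T'.Adj x y := (hT'adj x y).mpr (Or.inr (Or.inl ⟨rfl, rfl⟩))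
  have hT'ty : T'.Adj y t := by
    refine (hT'adj y t).mpr (Or.inl ⟨hty.symm, ?_, ?_⟩)
    · rintro ⟨rfl, -⟩; exact hxney rfl
    · rintro ⟨rfl, -⟩; exact htney rfl
  have hT'xu : ∀ i, T'.Adj x (u i) := by
    intro i
    refine (hT'adj x (u i)).mpr (Or.inl ⟨hadj i, ?_, ?_⟩)
    · rintro ⟨-, h⟩; exact hunet i h
    · rintro ⟨h, -⟩; exact hxnet h
  -- transfer: T-edges avoiding t are T'-edges
  have htrans_t : ∀ a b, T.Adj a b → a ≠ t → b ≠ t → T'.Adj a b := by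
    intro a b hab ha hb
    exact (hT'adj a b).mpr (Or.inl ⟨hab, fun h => hb h.2, fun h => ha h.1⟩)
  -- transfer: T-edges avoiding x are T'-edges
  have htrans_x : ∀ a b, T.Adj a b → a ≠ x → b ≠ x → T'.Adj a b := by
    intro a b hab ha hb
    exact (hT'adj a b).mpr (Or.inl ⟨hab, fun h => ha h.1, fun h => hb h.2⟩)
  -- reverse transfer
  have hrev : ∀ a b, T'.Adj a b → T.Adj a b ∨ (a = x ∧ b = y) ∨ (a = y ∧ b = x) := by
    intro a b hab
    rcases (hT'adj a b).mp hab with ⟨h, -, -⟩ | h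
    · exact Or.inl h
    · exact Or.inr h
  -- y's T'-neighbors
  have hynbr' : ∀ z, T'.Adj y z → z = t ∨ z = x := by
    intro z hz
    rcases hrev y z hz with h | ⟨h, -⟩ | ⟨-, h⟩
    · exact Or.inl (hynbr z h)
    · exact absurd h.symm hxney
    · exact Or.inr h
  -- x's T'-neighbors
  have hxnbr' : ∀ c, T'.Adj x c → c = y ∨ ∃ i, c = u i := by
    intro c hc
    rcases (hT'adj x c).mp hc with ⟨h1, h2, -⟩ | ⟨⟨-, h⟩ | ⟨h, -⟩⟩
    · rcases hxnbr c h1 with rfl | h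
      · exact absurd ⟨rfl, rfl⟩ h2
      · exact Or.inr h
    · exact Or.inl h
    · exact absurd h hxney

  -- the injection F and its left inverse Grec
  set F : Finset V → Finset V := fun S =>
    if x ∈ S then
      (if t ∈ S then DissocHelper.extMax T' (insert y (S.erase t))
       else if T'.IsDissocSet (insert t (S.erase y)) then insert t (S.erase y) else S.erase y)
    else S with hFdef
  set Grec : Finset V → Finset V := fun Z =>
    if x ∈ Z then
      (if y ∈ Z then insert x (insert t (Z \ insert y (T.neighborFinset t)))
       else insert y (Z.erase t))
    else Z with hGdef
  have hmain : ∀ S, T.IsMaxDissocSet S → T'.IsMaxDissocSet (F S) ∧ Grec (F S) = S := by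
    intro S hS
    by_cases hxS : x ∈ S
    · by_cases htS : t ∈ S
      · -- Case II : x ∈ S, t ∈ S
        have hyS : y ∉ S := by
          intro h
          exact hxney (hS.1 t htS x hxS y h hxt.symm hty)
        have huiS : ∀ i, u i ∉ S := by
          intro i h
          exact hunet i (hS.1 x hxS (u i) h t htS (hadj i) hxt)
        have htnbS : ∀ m ∈ S, T.Adj t m → m = x := by
          intro m hm hmt
          exact hS.1 t htS m hm x hxS hmt hxt.symm
        set S2 : Finset V := insert y (S.erase t) with hS2def
        have hF : F S = DissocHelper.extMax T' S2 := by
          simp only [hFdef]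
          rw [if_pos hxS, if_pos htS]
        have hmemS2 : ∀ m, m ∈ S2 ↔ m = y ∨ (m ≠ t ∧ m ∈ S) := by
          intro m
          simp [hS2def]
        have hxS2 : x ∈ S2 := (hmemS2 x).mpr (Or.inr ⟨hxnet, hxS⟩)
        have hyS2 : y ∈ S2 := (hmemS2 y).mpr (Or.inl rfl)
        have hS2dis : T'.IsDissocSet S2 := by
          intro a ha b hb c hc hab hac
          rcases (hmemS2 a).mp ha with hay | ⟨hat, haS⟩
          · rw [hay] at hab hac
            have hb' : b = x := by
              rcases hynbr' b hab with hbt | hbx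
              · exfalso
                rw [hbt] at hb
                rcases (hmemS2 t).mp hb with h | ⟨h, -⟩
                · exact htney h
                · exact h rfl
              · exact hbx
            have hc' : c = x := by
              rcases hynbr' c hac with hct | hcx
              · exfalso
                rw [hct] at hc
                rcases (hmemS2 t).mp hc with h | ⟨h, -⟩
                · exact htney h
                · exact h rfl
              · exact hcx
            rw [hb', hc']
          · by_cases hax : a = x
            · have hb' : b = y := by
                rcases hxnbr' b (hax ▸ hab) with hby | ⟨i, hbu⟩
                · exact hby
                · exfalso
                  rw [hbu] at hb
                  rcases (hmemS2 (u i)).mp hb with h | ⟨-, h⟩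
                  · exact huney i h
                  · exact huiS i h
              have hc' : c = y := by
                rcases hxnbr' c (hax ▸ hac) with hcy | ⟨i, hcu⟩
                · exact hcy
                · exfalso
                  rw [hcu] at hc
                  rcases (hmemS2 (u i)).mp hc with h | ⟨-, h⟩
                  · exact huney i h
                  · exact huiS i h
              rw [hb', hc']
            · have haey : a ≠ y := fun h => hyS (h ▸ haS)
              have hab' : T.Adj a b := by
                rcases hrev a b hab with h | ⟨h, -⟩ | ⟨h, -⟩
                · exact h
                · exact absurd h hax
                · exact absurd h haey
              have hac' : T.Adj a c := by
                rcases hrev a c hac with h | ⟨h, -⟩ | ⟨h, -⟩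
                · exact h
                · exact absurd h hax
                · exact absurd h haey
              have hbS : b ∈ S := by
                rcases (hmemS2 b).mp hb with rfl | ⟨-, h⟩
                · exact absurd (hynbr a hab'.symm) hat
                · exact h
              have hcS : c ∈ S := by
                rcases (hmemS2 c).mp hc with rfl | ⟨-, h⟩
                · exact absurd (hynbr a hac'.symm) hat
                · exact h
              exact hS.1 a haS b hbS c hcS hab' hac'
        obtain ⟨hsub2, hadded2, hdis2, hblk2⟩ := DissocHelper.extMax_spec T' S2
        set Z := DissocHelper.extMax T' S2 with hZdef
        have hZmax : T'.IsMaxDissocSet Z := DissocHelper.max_of_blocked T' (hdis2 hS2dis) hblk2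
        have hyZ : y ∈ Z := hsub2 hyS2
        have hxZ : x ∈ Z := hsub2 hxS2
        have htZ : t ∉ Z := by
          intro h
          exact hxnet (hZmax.1 y hyZ x hxZ t h hT'xy.symm hT'ty)
        have hkey : ∀ w ∈ Z, w ∉ S2 → T.Adj t w := by
          intro w hw hw2
          have hwt : w ≠ t := fun h => htZ (h ▸ hw)
          have hwS : w ∉ S := fun h => hw2 ((hmemS2 w).mpr (Or.inr ⟨hwt, h⟩))
          have hdisw : T'.IsDissocSet (insert w S2) := by
            rcases hadded2 w hw with h | h
            · exact absurd h hw2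
            · exact h
          by_contra hnadj
          have hnd := DissocHelper.blocked_of_max T hS w hwS
          obtain ⟨a, ha, b, hb, c, hc, hab, hac, hbc⟩ := DissocHelper.viol_of_not_dissoc T hnd
          have hmem' : ∀ m, m ∈ insert w S → m ≠ t → m ∈ insert w S2 := by
            intro m hm hmt
            rcases Finset.mem_insert.mp hm with rfl | hm'
            · exact Finset.mem_insert_self _ _
            · exact Finset.mem_insert_of_mem ((hmemS2 m).mpr (Or.inr ⟨hmt, hm'⟩))
          have htnb' : ∀ m ∈ insert w S, T.Adj t m → m = x := by
            intro m hm hmt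
            rcases Finset.mem_insert.mp hm with rfl | hm'
            · exact absurd hmt hnadj
            · exact htnbS m hm' hmt
          by_cases hat : a = t
          · exact hbc ((htnb' b hb (hat ▸ hab)).trans (htnb' c hc (hat ▸ hac)).symm)
          by_cases hbt : b = t
          · have hax : a = x := by
              rcases Finset.mem_insert.mp ha with rfl | ha'
              · exact absurd (hbt ▸ hab).symm hnadj
              · exact htnb' a (Finset.mem_insert_of_mem ha') (hbt ▸ hab).symm
            have hct : c ≠ t := fun h => hbc (hbt.trans h.symm)
            rcases hxnbr c (hax ▸ hac) with h | ⟨i, rfl⟩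
            · exact hct h
            · have hui_w : u i = w := by
                rcases Finset.mem_insert.mp hc with h | h
                · exact h
                · exact absurd h (huiS i)
              exact (huney i) (hdisw x (Finset.mem_insert_of_mem hxS2) (u i)
                (hui_w ▸ Finset.mem_insert_self w S2) y (Finset.mem_insert_of_mem hyS2)
                (hT'xu i) hT'xy)
          by_cases hct : c = t
          · have hax : a = x := by
              rcases Finset.mem_insert.mp ha with rfl | ha'
              · exact absurd (hct ▸ hac).symm hnadj
              · exact htnb' a (Finset.mem_insert_of_mem ha') (hct ▸ hac).symm
            rcases hxnbr b (hax ▸ hab) with h | ⟨i, rfl⟩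
            · exact hbt h
            · have hui_w : u i = w := by
                rcases Finset.mem_insert.mp hb with h | h
                · exact h
                · exact absurd h (huiS i)
              exact (huney i) (hdisw x (Finset.mem_insert_of_mem hxS2) (u i)
                (hui_w ▸ Finset.mem_insert_self w S2) y (Finset.mem_insert_of_mem hyS2)
                (hT'xu i) hT'xy)
          · exact hbc (hdisw a (hmem' a ha hat) b (hmem' b hb hbt) c (hmem' c hc hct)
              (htrans_t a b hab hat hbt) (htrans_t a c hac hat hct))
        constructor
        · rw [hF]
          exact hZmax
        · rw [hF]
          simp only [hGdef]
          rw [if_pos hxZ, if_pos hyZ]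
          have hsd : Z \ insert y (T.neighborFinset t) = (S.erase t).erase x := by
            ext w
            simp only [Finset.mem_sdiff, Finset.mem_insert,
              SimpleGraph.mem_neighborFinset, Finset.mem_erase]
            constructor
            · rintro ⟨hwZ, hwn⟩
              push_neg at hwn
              obtain ⟨hwy, hwnadj⟩ := hwn
              have hwS2 : w ∈ S2 := by
                by_contra h
                exact hwnadj (hkey w hwZ h)
              rcases (hmemS2 w).mp hwS2 with rfl | ⟨hwt, hwS⟩
              · exact absurd rfl hwy
              · refine ⟨?_, hwt, hwS⟩
                rintro rfl
                exact hwnadj hxt.symm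
            · rintro ⟨hwx, hwt, hwS⟩
              refine ⟨hsub2 ((hmemS2 w).mpr (Or.inr ⟨hwt, hwS⟩)), ?_⟩
              rintro (rfl | hadj')
              · exact hyS hwS
              · exact hwx (htnbS w hwS hadj')
          rw [hsd]
          ext m
          simp only [Finset.mem_insert, Finset.mem_erase]
          constructor
          · rintro (rfl | rfl | ⟨-, -, h⟩)
            · exact hxS
            · exact htS
            · exact h
          · intro hm
            by_cases h1 : m = x
            · exact Or.inl h1
            by_cases h2 : m = t
            · exact Or.inr (Or.inl h2)
            · exact Or.inr (Or.inr ⟨h1, h2, hm⟩)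
      · -- Case III : x ∈ S, t ∉ S
        have hyS : y ∈ S := by
          by_contra hyS
          apply DissocHelper.blocked_of_max T hS y hyS
          intro a ha b hb c hc hab hac
          by_cases hay : a = y
          · exfalso
            have hbt := hynbr b (hay ▸ hab)
            rw [hbt] at hb
            rcases Finset.mem_insert.mp hb with h | h
            · exact htney h
            · exact htS h
          · have haS : a ∈ S := (Finset.mem_insert.mp ha).resolve_left hay
            by_cases hby : b = y
            · exfalso
              have := hynbr a (hby ▸ hab).symm
              rw [this] at haS
              exact htS haS
            · have hbS : b ∈ S := (Finset.mem_insert.mp hb).resolve_left hby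
              by_cases hcy : c = y
              · exfalso
                have := hynbr a (hcy ▸ hac).symm
                rw [this] at haS
                exact htS haS
              · have hcS := (Finset.mem_insert.mp hc).resolve_left hcy
                exact hS.1 a haS b hbS c hcS hab hac
        have hujS : ∃ j, u j ∈ S := by
          by_contra huj
          push_neg at huj
          set i0 : Fin k := ⟨0, by omega⟩ with hi0
          apply DissocHelper.blocked_of_max T hS (u i0) (huj i0)
          intro a ha b hb c hc hab hac
          by_cases hau : a = u i0
          · rw [hunbr i0 b (hau ▸ hab), hunbr i0 c (hau ▸ hac)]
          · have haS : a ∈ S := (Finset.mem_insert.mp ha).resolve_left hau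
            by_cases hbu : b = u i0
            · have hax : a = x := hunbr i0 a (hbu ▸ hab).symm
              rcases hxnbr c (hax ▸ hac) with hct | ⟨i, hcu⟩
              · exfalso
                rw [hct] at hc
                rcases Finset.mem_insert.mp hc with h | h
                · exact hunet i0 h.symm
                · exact htS h
              · rw [hcu] at hc
                rcases Finset.mem_insert.mp hc with h | h
                · rw [hbu, hcu, h]
                · exact absurd h (huj i)
            · by_cases hcu : c = u i0
              · have hax : a = x := hunbr i0 a (hcu ▸ hac).symm
                rcases hxnbr b (hax ▸ hab) with hbt | ⟨i, hbu⟩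
                · exfalso
                  rw [hbt] at hb
                  rcases Finset.mem_insert.mp hb with h | h
                  · exact hunet i0 h.symm
                  · exact htS h
                · rw [hbu] at hb
                  rcases Finset.mem_insert.mp hb with h | h
                  · rw [hcu, hbu, h]
                  · exact absurd h (huj i)
              · have hbS : b ∈ S := (Finset.mem_insert.mp hb).resolve_left hbu
                have hcS : c ∈ S := (Finset.mem_insert.mp hc).resolve_left hcu
                exact hS.1 a haS b hbS c hcS hab hac
        obtain ⟨j, hujS⟩ := hujS
        have hF : F S = if T'.IsDissocSet (insert t (S.erase y)) then insert t (S.erase y)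
            else S.erase y := by
          simp only [hFdef]
          rw [if_pos hxS, if_neg htS]
        have hxS0 : x ∈ S.erase y := Finset.mem_erase.mpr ⟨hxney, hxS⟩
        have hujS0 : u j ∈ S.erase y := Finset.mem_erase.mpr ⟨huney j, hujS⟩
        have htS0 : t ∉ S.erase y := fun h => htS (Finset.mem_erase.mp h).2
        have hS0sub : S.erase y ⊆ F S := by
          rw [hF]
          split
          · exact Finset.subset_insert _ _
          · exact Finset.Subset.refl _
        have hyF : y ∉ F S := by
          rw [hF]
          split <;> intro h
          · rcases Finset.mem_insert.mp h with h | h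
            · exact htney h.symm
            · exact (Finset.mem_erase.mp h).1 rfl
          · exact (Finset.mem_erase.mp h).1 rfl
        have hS0dis : T'.IsDissocSet (S.erase y) := by
          intro a ha b hb c hc hab hac
          have hay : a ≠ y := (Finset.mem_erase.mp ha).1
          have hby : b ≠ y := (Finset.mem_erase.mp hb).1
          have hcy : c ≠ y := (Finset.mem_erase.mp hc).1
          have hab' : T.Adj a b := by
            rcases hrev a b hab with h | ⟨-, h⟩ | ⟨h, -⟩
            · exact h
            · exact absurd h hby
            · exact absurd h hay
          have hac' : T.Adj a c := by
            rcases hrev a c hac with h | ⟨-, h⟩ | ⟨h, -⟩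
            · exact h
            · exact absurd h hcy
            · exact absurd h hay
          exact hS.1 a (Finset.mem_of_mem_erase ha) b (Finset.mem_of_mem_erase hb) c
            (Finset.mem_of_mem_erase hc) hab' hac'
        have hFdis : T'.IsDissocSet (F S) := by
          rw [hF]
          split
          · next h => exact h
          · exact hS0dis
        have hblocked : ∀ v, v ∉ F S → ¬ T'.IsDissocSet (insert v (F S)) := by
          intro v hv
          by_cases hvy : v = y
          · rw [hvy]
            exact DissocHelper.not_dissoc_of_viol T'
              (Finset.mem_insert_of_mem (hS0sub hxS0))
              (Finset.mem_insert_self _ _)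
              (Finset.mem_insert_of_mem (hS0sub hujS0))
              hT'xy (hT'xu j) (huney j).symm
          · by_cases hvt : v = t
            · rw [hF] at hv ⊢
              rw [hvt] at hv ⊢
              by_cases hcond : T'.IsDissocSet (insert t (S.erase y))
              · rw [if_pos hcond] at hv
                exact absurd (Finset.mem_insert_self _ _) hv
              · rw [if_neg hcond]
                exact hcond
            · have hvS : v ∉ S := by
                intro h
                exact hv (hS0sub (Finset.mem_erase.mpr ⟨hvy, h⟩))
              have hnd := DissocHelper.blocked_of_max T hS v hvS
              obtain ⟨a, ha, b, hb, c, hc, hab, hac, hbc⟩ :=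
                DissocHelper.viol_of_not_dissoc T hnd
              have htmem : t ∉ insert v S := by
                intro h
                rcases Finset.mem_insert.mp h with h | h
                · exact hvt h.symm
                · exact htS h
              have hanet : a ≠ t := fun h => htmem (h ▸ ha)
              have hbnet : b ≠ t := fun h => htmem (h ▸ hb)
              have hcnet : c ≠ t := fun h => htmem (h ▸ hc)
              have haney : a ≠ y := by
                rintro rfl
                exact hbnet (hynbr b hab)
              have hbney : b ≠ y := by
                rintro rfl
                exact hanet (hynbr a hab.symm)
              have hcney : c ≠ y := by
                rintro rfl
                exact hanet (hynbr a hac.symm)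
              have hmem' : ∀ m, m ∈ insert v S → m ≠ y → m ∈ insert v (F S) := by
                intro m hm hmy
                rcases Finset.mem_insert.mp hm with rfl | hm'
                · exact Finset.mem_insert_self _ _
                · exact Finset.mem_insert_of_mem (hS0sub (Finset.mem_erase.mpr ⟨hmy, hm'⟩))
              exact DissocHelper.not_dissoc_of_viol T' (hmem' a ha haney) (hmem' b hb hbney)
                (hmem' c hc hcney) (htrans_t a b hab hanet hbnet)
                (htrans_t a c hac hanet hcnet) hbc
        refine ⟨DissocHelper.max_of_blocked T' hFdis hblocked, ?_⟩
        have hxF : x ∈ F S := hS0sub hxS0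
        simp only [hGdef]
        rw [if_pos hxF, if_neg hyF]
        have herase : (F S).erase t = S.erase y := by
          rw [hF]
          split
          · rw [Finset.erase_insert htS0]
          · exact Finset.erase_eq_of_notMem htS0
        rw [herase, Finset.insert_erase hyS]
    · -- Case I : x ∉ S
      have hF : F S = S := by
        simp only [hFdef]
        rw [if_neg hxS]
      have huS : ∀ i, u i ∈ S := by
        intro i
        by_contra hui
        apply DissocHelper.blocked_of_max T hS (u i) hui
        intro a ha b hb c hc hab hac
        by_cases hau : a = u i
        · rw [hunbr i b (hau ▸ hab), hunbr i c (hau ▸ hac)]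
        · have haS : a ∈ S := (Finset.mem_insert.mp ha).resolve_left hau
          by_cases hbu : b = u i
          · exfalso
            have := hunbr i a (hbu ▸ hab).symm
            rw [this] at haS
            exact hxS haS
          · by_cases hcu : c = u i
            · exfalso
              have := hunbr i a (hcu ▸ hac).symm
              rw [this] at haS
              exact hxS haS
            · have hbS : b ∈ S := (Finset.mem_insert.mp hb).resolve_left hbu
              have hcS : c ∈ S := (Finset.mem_insert.mp hc).resolve_left hcu
              exact hS.1 a haS b hbS c hcS hab hac
      have hSdis' : T'.IsDissocSet S := by
        intro a ha b hb c hc hab hac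
        have hab' : T.Adj a b := by
          rcases hrev a b hab with h | ⟨h, -⟩ | ⟨-, h⟩
          · exact h
          · exact absurd (h ▸ ha) hxS
          · exact absurd (h ▸ hb) hxS
        have hac' : T.Adj a c := by
          rcases hrev a c hac with h | ⟨h, -⟩ | ⟨-, h⟩
          · exact h
          · exact absurd (h ▸ ha) hxS
          · exact absurd (h ▸ hc) hxS
        exact hS.1 a ha b hb c hc hab' hac'
      have hblocked : ∀ v, v ∉ S → ¬ T'.IsDissocSet (insert v S) := by
        intro v hv
        by_cases hvx : v = x
        · rw [hvx]
          have hne : u ⟨0, by omega⟩ ≠ u ⟨1, by omega⟩ := by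
            intro h
            have := hinj h
            simp [Fin.ext_iff] at this
          exact DissocHelper.not_dissoc_of_viol T'
            (Finset.mem_insert_self _ _)
            (Finset.mem_insert_of_mem (huS ⟨0, by omega⟩))
            (Finset.mem_insert_of_mem (huS ⟨1, by omega⟩))
            (hT'xu _) (hT'xu _) hne
        · have hnd := DissocHelper.blocked_of_max T hS v hv
          obtain ⟨a, ha, b, hb, c, hc, hab, hac, hbc⟩ := DissocHelper.viol_of_not_dissoc T hnd
          have hxmem : x ∉ insert v S := by
            intro h
            rcases Finset.mem_insert.mp h with h | h
            · exact hvx h.symm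
            · exact hxS h
          have hax : a ≠ x := fun h => hxmem (h ▸ ha)
          have hbx : b ≠ x := fun h => hxmem (h ▸ hb)
          have hcx : c ≠ x := fun h => hxmem (h ▸ hc)
          exact DissocHelper.not_dissoc_of_viol T' ha hb hc
            (htrans_x a b hab hax hbx) (htrans_x a c hac hax hcx) hbc
      constructor
      · rw [hF]
        exact DissocHelper.max_of_blocked T' hSdis' hblocked
      · rw [hF]
        simp only [hGdef]
        rw [if_neg hxS]
  show Set.ncard {S : Finset V | T.IsMaxDissocSet S} ≤
    Set.ncard {S : Finset V | T'.IsMaxDissocSet S}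
  apply Set.ncard_le_ncard_of_injOn F ?_ ?_ (Set.toFinite _)
  · intro S hSmem
    have hS : T.IsMaxDissocSet S := hSmem
    show T'.IsMaxDissocSet (F S)
    exact (hmain S hS).1
  · intro S1 h1 S2 h2 he
    have hS1 : T.IsMaxDissocSet S1 := h1
    have hS2 : T.IsMaxDissocSet S2 := h2
    rw [← (hmain S1 hS1).2, ← (hmain S2 hS2).2, he]
end

section
/- Every tree T of order n whose diameter is at most 3 satisfies Φ(T) ≤ n, i.e., T has at most n maximal dissociation sets. -/
section Aux

open SimpleGraph Walk

variable {V : Type*} {T : SimpleGraph V}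

lemma walk_closed {X : Set V} (hX : ∀ x ∈ X, ∀ y, T.Adj x y → y ∈ X)
    {a b : V} (p : T.Walk a b) (ha : a ∈ X) : b ∈ X := by
  induction p with
  | nil => exact ha
  | cons h q ih => exact ih (hX _ ha _ h)

lemma no_triangle (hT : T.IsTree) {u v w : V} (huv : T.Adj u v) (hvw : T.Adj v w)
    (huw : T.Adj u w) : False := by
  have hp1 : (Walk.cons huw Walk.nil : T.Walk u w).IsPath := by
    simp [Walk.isPath_def, huw.ne]
  have hp2 : (Walk.cons huv (Walk.cons hvw Walk.nil) : T.Walk u w).IsPath := by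
    simp [Walk.isPath_def, huv.ne, huw.ne, hvw.ne]
  have := (hT.existsUnique_path u w).unique hp1 hp2
  simpa using congrArg Walk.length this

lemma neighbor_not_mem_support [DecidableEq V] (hT : T.IsTree) {u v a : V} {p : T.Walk u v}
    (hp : p.IsPath) (ha : T.Adj u a) (hne : a ≠ p.getVert 1) : a ∉ p.support := by
  intro hmem
  have ht : (p.takeUntil a hmem).IsPath := hp.takeUntil hmem
  have he : (Walk.cons ha Walk.nil : T.Walk u a).IsPath := by
    simp [Walk.isPath_def, ha.ne]
  have heq := (hT.existsUnique_path u a).unique ht he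
  have hspec := p.take_spec hmem
  rw [heq] at hspec
  apply hne
  rw [← hspec]
  simp [Walk.cons_append, Walk.getVert_cons_succ]

lemma centers_adj [DecidableEq V] (hT : T.IsTree) (hd : ∀ a b : V, T.dist a b ≤ 3)
    {u v : V} (hu : ∃ z₁ z₂, z₁ ≠ z₂ ∧ T.Adj u z₁ ∧ T.Adj u z₂)
    (hv : ∃ z₁ z₂, z₁ ≠ z₂ ∧ T.Adj v z₁ ∧ T.Adj v z₂)
    (hne : u ≠ v) : T.Adj u v := by
  by_contra hnadj
  obtain ⟨p, hp, hplen⟩ := hT.isConnected.exists_path_of_dist u v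
  have hd2 : 2 ≤ T.dist u v := by
    have h0 : T.dist u v ≠ 0 := fun h => hne (hT.isConnected.dist_eq_zero_iff.mp h)
    have h1 : T.dist u v ≠ 1 := fun h => hnadj (dist_eq_one_iff_adj.mp h)
    omega
  -- pick a neighbor `a` of `u` avoiding the second vertex of `p`
  obtain ⟨z₁, z₂, hz12, hz1, hz2⟩ := hu
  obtain ⟨a, hua, ha1⟩ : ∃ a, T.Adj u a ∧ a ≠ p.getVert 1 := by
    by_cases h : z₁ = p.getVert 1
    · exact ⟨z₂, hz2, by rw [← h]; exact fun hh => hz12 hh.symm⟩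
    · exact ⟨z₁, hz1, h⟩
  have haS : a ∉ p.support := neighbor_not_mem_support hT hp hua ha1
  -- pick a neighbor `b` of `v` avoiding the second vertex of `p.reverse`
  obtain ⟨w₁, w₂, hw12, hw1, hw2⟩ := hv
  obtain ⟨b, hvb, hb1⟩ : ∃ b, T.Adj v b ∧ b ≠ p.reverse.getVert 1 := by
    by_cases h : w₁ = p.reverse.getVert 1
    · exact ⟨w₂, hw2, by rw [← h]; exact fun hh => hw12 hh.symm⟩
    · exact ⟨w₁, hw1, h⟩
  have hbS : b ∉ p.support := by
    have := neighbor_not_mem_support hT hp.reverse hvb hb1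
    simpa using this
  have hab : a ≠ b := by
    rintro rfl
    have hq2 : (Walk.cons hua (Walk.cons hvb.symm Walk.nil) : T.Walk u v).IsPath := by
      simp [Walk.isPath_def, hua.ne, hvb.ne, hvb.ne', hne]
    have heq := (hT.existsUnique_path u v).unique hq2 hp
    apply ha1
    rw [← heq]
    simp [Walk.getVert_cons_succ]
  -- the long path from `a` to `b`
  set W : T.Walk a b := Walk.cons hua.symm (p.append (Walk.cons hvb Walk.nil)) with hW
  have hsup : W.support = a :: (p.support ++ [b]) := by
    rw [hW]
    simp [Walk.support_append]
  have hWpath : W.IsPath := by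
    rw [Walk.isPath_def, hsup]
    rw [List.nodup_cons, List.nodup_append]
    refine ⟨?_, hp.support_nodup, List.nodup_singleton b, ?_⟩
    · simp only [List.mem_append, List.mem_singleton]
      push_neg
      exact ⟨haS, hab⟩
    · intro x hx
      simp only [List.mem_singleton]
      intro y hy hxy
      have hyb : y = b := by simpa using hy
      exact hbS (by rw [← hyb, ← hxy]; exact hx)
  have hWlen : W.length = T.dist u v + 2 := by
    rw [hW]
    simp only [Walk.length_cons, Walk.length_append, Walk.length_nil, hplen]
  obtain ⟨g, hg, hglen⟩ := hT.isConnected.exists_path_of_dist a b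
  have := (hT.existsUnique_path a b).unique hWpath hg
  have hlen : W.length = T.dist a b := by rw [this, hglen]
  have := hd a b
  omega

/-- In a connected graph, a vertex distinct from some other vertex has a neighbor. -/
lemma exists_neighbor (hc : T.Connected) {u t : V} (hut : u ≠ t) :
    ∃ z, T.Adj u z := by
  obtain ⟨p⟩ := hc.preconnected u t
  cases p with
  | nil => exact absurd rfl hut
  | cons h q => exact ⟨_, h⟩

/-- Two mutually-exclusive-neighborhood vertices form a component; a third vertex
contradicts connectivity. -/
lemma two_leaf_absurd (hc : T.Connected) {w z t : V}
    (hw : ∀ y, T.Adj w y → y = z) (hz : ∀ y, T.Adj z y → y = w)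
    (htw : t ≠ w) (htz : t ≠ z) : False := by
  obtain ⟨p⟩ := hc.preconnected w t
  have := walk_closed (X := {w, z}) ?_ p (by simp)
  · rcases this with h | h
    · exact htw h
    · exact htz h
  · rintro x (rfl | rfl) y hy
    · exact Or.inr (hw y hy)
    · exact Or.inl (hz y hy)

lemma classify [DecidableEq V] (hT : T.IsTree) (hd : ∀ a b : V, T.dist a b ≤ 3) :
    (∃ u : V, ∀ w, w ≠ u → T.Adj w u ∧ ∀ z, T.Adj w z → z = u) ∨
    (∃ u v : V, T.Adj u v ∧
      (∀ w, w ≠ u → w ≠ v → ∃ c, (c = u ∨ c = v) ∧ T.Adj w c ∧ ∀ z, T.Adj w z → z = c) ∧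
      (((∃ x, T.Adj u x ∧ x ≠ v) ∧ (∃ y, T.Adj v y ∧ y ≠ u)) ∨ (∀ w, w = u ∨ w = v))) := by
  classical
  set Ctr : V → Prop := fun w => ∃ z₁ z₂, z₁ ≠ z₂ ∧ T.Adj w z₁ ∧ T.Adj w z₂ with hCtr
  have hnc : ∀ w, ¬Ctr w → ∀ z₁ z₂, T.Adj w z₁ → T.Adj w z₂ → z₁ = z₂ := by
    intro w h z₁ z₂ h1 h2
    by_contra hne
    exact h ⟨z₁, z₂, hne, h1, h2⟩
  have hconn := hT.isConnected
  by_cases hC : ∃ u v, u ≠ v ∧ Ctr u ∧ Ctr v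
  · obtain ⟨u, v, huv, hu, hv⟩ := hC
    have hadj : T.Adj u v := centers_adj hT hd hu hv huv
    refine Or.inr ⟨u, v, hadj, ?_, ?_⟩
    · intro w hwu hwv
      have hwnc : ¬Ctr w := by
        intro hw
        have h1 : T.Adj w u := centers_adj hT hd hw hu hwu
        have h2 : T.Adj w v := centers_adj hT hd hw hv hwv
        exact no_triangle hT hadj h2.symm h1.symm
      obtain ⟨z, hz⟩ := exists_neighbor hconn hwu
      have hzuv : z = u ∨ z = v := by
        by_contra hzz
        push_neg at hzz
        have hznc : ¬Ctr z := by
          intro hzc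
          have h1 : T.Adj z u := centers_adj hT hd hzc hu hzz.1
          have h2 : T.Adj z v := centers_adj hT hd hzc hv hzz.2
          exact no_triangle hT hadj h2.symm h1.symm
        exact two_leaf_absurd hconn (fun y hy => hnc w hwnc y z hy hz)
          (fun y hy => hnc z hznc y w hy hz.symm) hwu.symm (fun h => hzz.1 h.symm)
      exact ⟨z, hzuv, hz, fun y hy => hnc w hwnc y z hy hz⟩
    · left
      obtain ⟨z₁, z₂, h12, h1, h2⟩ := hu
      obtain ⟨w₁, w₂, g12, g1, g2⟩ := hv
      constructor
      · by_cases h : z₁ = v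
        · exact ⟨z₂, h2, fun hh => h12 (h ▸ hh ▸ rfl)⟩
        · exact ⟨z₁, h1, h⟩
      · by_cases h : w₁ = u
        · exact ⟨w₂, g2, fun hh => g12 (h ▸ hh ▸ rfl)⟩
        · exact ⟨w₁, g1, h⟩
  · push_neg at hC
    by_cases hC1 : ∃ u, Ctr u
    · obtain ⟨u, hu⟩ := hC1
      refine Or.inl ⟨u, ?_⟩
      intro w hwu
      have hwnc : ¬Ctr w := fun hw => (hC w u hwu) hw hu
      obtain ⟨z, hz⟩ := exists_neighbor hconn hwu
      have hzu : z = u := by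
        by_contra hzz
        have hznc : ¬Ctr z := fun hw => (hC z u hzz) hw hu
        exact two_leaf_absurd hconn (fun y hy => hnc w hwnc y z hy hz)
          (fun y hy => hnc z hznc y w hy hz.symm) hwu.symm (Ne.symm hzz)
      exact ⟨hzu ▸ hz, fun y hy => (hnc w hwnc y z hy hz).trans hzu⟩
    · push_neg at hC1
      obtain ⟨u⟩ := hconn.nonempty
      by_cases hall : ∀ w : V, w = u
      · exact Or.inl ⟨u, fun w hw => absurd (hall w) hw⟩
      · push_neg at hall
        obtain ⟨t, ht⟩ := hall
        obtain ⟨z, hz⟩ := exists_neighbor hconn (Ne.symm ht)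
        have huniq_u : ∀ y, T.Adj u y → y = z := fun y hy => hnc u (hC1 u) y z hy hz
        have huniq_z : ∀ y, T.Adj z y → y = u := fun y hy => hnc z (hC1 z) y u hy hz.symm
        have hmem : ∀ w : V, w = u ∨ w = z := by
          intro w
          by_contra hw
          push_neg at hw
          exact two_leaf_absurd hconn huniq_u huniq_z hw.1 hw.2
        refine Or.inr ⟨u, z, hz, ?_, Or.inr hmem⟩
        intro w hwu hwz
        rcases hmem w with rfl | rfl
        · exact absurd rfl hwu
        · exact absurd rfl hwz


variable {V : Type*} {T : SimpleGraph V} [DecidableEq V]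

/-- A vertex with no neighbor in a maximal dissociation set belongs to it. -/
lemma mem_of_no_neighbor {S : Finset V} (hS : T.IsMaxDissocSet S) {w : V}
    (hw : ∀ s ∈ S, ¬T.Adj w s) : w ∈ S := by
  have hd : T.IsDissocSet (insert w S) := by
    intro a ha b hb c hc hab hac
    rcases Finset.mem_insert.mp ha with ha | ha
    · rcases Finset.mem_insert.mp hb with hb | hb
      · rw [ha, hb] at hab
        exact absurd hab (T.loopless.irrefl w)
      · rw [ha] at hab
        exact absurd hab (hw b hb)
    · rcases Finset.mem_insert.mp hb with hb | hb
      · rw [hb] at hab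
        exact absurd hab.symm (hw a ha)
      · rcases Finset.mem_insert.mp hc with hc | hc
        · rw [hc] at hac
          exact absurd hac.symm (hw a ha)
        · exact hS.1 a ha b hb c hc hab hac
  have := hS.2 _ hd (Finset.subset_insert w S)
  rw [this]
  exact Finset.mem_insert_self w S

/-- A vertex whose unique neighbor `z` lies in a maximal dissociation set, where `z`
itself has no neighbor in the set, belongs to the set. -/
lemma mem_of_unique_neighbor {S : Finset V} (hS : T.IsMaxDissocSet S) {w z : V}
    (hz : z ∈ S) (huniq : ∀ t, T.Adj w t → t = z) (hznbr : ∀ s ∈ S, ¬T.Adj z s) :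
    w ∈ S := by
  have hd : T.IsDissocSet (insert w S) := by
    intro a ha b hb c hc hab hac
    rcases Finset.mem_insert.mp ha with ha | ha
    · rw [ha] at hab hac
      rw [huniq b hab, huniq c hac]
    · rcases Finset.mem_insert.mp hb with hb | hb
      · rw [hb] at hab
        have haz : a = z := huniq a hab.symm
        rcases Finset.mem_insert.mp hc with hc | hc
        · rw [hb, hc]
        · rw [haz] at hac
          exact absurd hac (hznbr c hc)
      · rcases Finset.mem_insert.mp hc with hc | hc
        · rw [hc] at hac
          have haz : a = z := huniq a hac.symm
          rw [haz] at hab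
          exact absurd hab (hznbr b hb)
        · exact hS.1 a ha b hb c hc hab hac
  have := hS.2 _ hd (Finset.subset_insert w S)
  rw [this]
  exact Finset.mem_insert_self w S

lemma star_bound [Fintype V] {u : V}
    (hstar : ∀ w, w ≠ u → T.Adj w u ∧ ∀ z, T.Adj w z → z = u) :
    T.phi ≤ Fintype.card V := by
  classical
  set M : Set (Finset V) := {S | T.IsMaxDissocSet S} with hM
  have hA : ∀ S ∈ M, u ∉ S → ∀ w : V, w ∈ S ↔ w ≠ u := by
    intro S hS hu w
    constructor
    · rintro hw rfl; exact hu hw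
    · intro hw
      apply mem_of_no_neighbor hS
      intro s hs hadj
      rw [(hstar w hw).2 s hadj] at hs
      exact hu hs
  have hB : ∀ S ∈ M, u ∈ S → ∀ x ∈ S, x ≠ u → S = {u, x} := by
    intro S hS hu x hx hxu
    apply Finset.Subset.antisymm
    · intro w hw
      rcases eq_or_ne w u with rfl | hwu
      · exact Finset.mem_insert_self _ _
      · have h1 : T.Adj u w := ((hstar w hwu).1).symm
        have h2 : T.Adj u x := ((hstar x hxu).1).symm
        have := hS.1 u hu w hw x hx h1 h2
        simp [this]
    · intro w hw
      rcases Finset.mem_insert.mp hw with hw | hw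
      · rwa [hw]
      · rw [Finset.mem_singleton.mp hw]; exact hx
  have hC : ∀ S ∈ M, u ∈ S → (∀ x ∈ S, x = u) → ∀ w : V, w = u := by
    intro S hS hu hSu w
    by_contra hwu
    have hw : w ∈ S := by
      apply mem_of_unique_neighbor hS hu (hstar w hwu).2
      intro s hs hadj
      rw [hSu s hs] at hadj
      exact T.loopless.irrefl u hadj
    exact hwu (hSu w hw)
  have hD : ∀ S ∈ M, u ∉ S → (∀ w : V, w = u) → False := by
    intro S hS hu hall
    apply hu
    apply mem_of_no_neighbor hS
    intro s hs hadj
    rw [hall s] at hadj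
    exact T.loopless.irrefl u hadj
  set f : Finset V → V :=
    fun S => if u ∈ S then (if h : ∃ x, x ∈ S ∧ x ≠ u then h.choose else u) else u with hf
  have hinj : Set.InjOn f M := by
    intro S hS S' hS' heq
    by_cases h1 : u ∈ S <;> by_cases h2 : u ∈ S'
    · rw [hf] at heq
      simp only [if_pos h1, if_pos h2] at heq
      by_cases e1 : ∃ x, x ∈ S ∧ x ≠ u <;> by_cases e2 : ∃ x, x ∈ S' ∧ x ≠ u
      · rw [dif_pos e1, dif_pos e2] at heq
        obtain ⟨hx1, hx1u⟩ := e1.choose_spec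
        obtain ⟨hx2, hx2u⟩ := e2.choose_spec
        rw [hB S hS h1 _ hx1 hx1u, hB S' hS' h2 _ hx2 hx2u, heq]
      · rw [dif_pos e1, dif_neg e2] at heq
        exact absurd heq e1.choose_spec.2
      · rw [dif_neg e1, dif_pos e2] at heq
        exact absurd heq.symm e2.choose_spec.2
      · push_neg at e1 e2
        apply Finset.ext
        intro w
        constructor
        · intro hw; rw [e1 w hw]; exact h2
        · intro hw; rw [e2 w hw]; exact h1
    · rw [hf] at heq
      simp only [if_pos h1, if_neg h2] at heq
      by_cases e1 : ∃ x, x ∈ S ∧ x ≠ u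
      · rw [dif_pos e1] at heq
        exact absurd heq e1.choose_spec.2
      · push_neg at e1
        exact absurd (hC S hS h1 e1) (fun hall => hD S' hS' h2 hall)
    · rw [hf] at heq
      simp only [if_neg h1, if_pos h2] at heq
      by_cases e2 : ∃ x, x ∈ S' ∧ x ≠ u
      · rw [dif_pos e2] at heq
        exact absurd heq.symm e2.choose_spec.2
      · push_neg at e2
        exact absurd (hC S' hS' h2 e2) (fun hall => hD S hS h1 hall)
    · exact Finset.ext fun w => (hA S hS h1 w).trans (hA S' hS' h2 w).symm
  have hcard := Set.ncard_le_ncard_of_injOn f (fun S _ => Set.mem_univ (f S)) hinj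
    Set.finite_univ
  rwa [Set.ncard_univ, Nat.card_eq_fintype_card] at hcard

lemma dstar_bound [Fintype V] {u v : V} (hadj : T.Adj u v)
    (hleaf : ∀ w, w ≠ u → w ≠ v → ∃ c, (c = u ∨ c = v) ∧ T.Adj w c ∧ ∀ z, T.Adj w z → z = c)
    (hor : ((∃ x, T.Adj u x ∧ x ≠ v) ∧ (∃ y, T.Adj v y ∧ y ≠ u)) ∨ (∀ w, w = u ∨ w = v)) :
    T.phi ≤ Fintype.card V := by
  classical
  have huv : u ≠ v := hadj.ne
  set M : Set (Finset V) := {S | T.IsMaxDissocSet S} with hM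
  -- both centers in S : S = {u, v}
  have hD : ∀ S ∈ M, u ∈ S → v ∈ S → S = {u, v} := by
    intro S hS hu hv
    apply Finset.Subset.antisymm
    · intro w hw
      by_contra hw2
      simp only [Finset.mem_insert, Finset.mem_singleton, not_or] at hw2
      obtain ⟨c, hc, hwc, _⟩ := hleaf w hw2.1 hw2.2
      rcases hc with rfl | rfl
      · exact hw2.2 (hS.1 c hu w hw v hv hwc.symm hadj)
      · exact hw2.1 (hS.1 c hv w hw u hu hwc.symm hadj.symm)
    · intro w hw
      rcases Finset.mem_insert.mp hw with hw | hw
      · rwa [hw]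
      · rw [Finset.mem_singleton.mp hw]; exact hv
  -- u in S, v not, with a neighbor x of u in S
  have hE : ∀ S ∈ M, u ∈ S → v ∉ S → ∀ x ∈ S, T.Adj u x →
      ∀ w : V, w ∈ S ↔ (w = u ∨ w = x ∨ (w ≠ u ∧ w ≠ v ∧ T.Adj w v)) := by
    intro S hS hu hv x hx hux w
    constructor
    · intro hw
      by_cases hwu : w = u
      · exact Or.inl hwu
      by_cases hwx : w = x
      · exact Or.inr (Or.inl hwx)
      have hwv : w ≠ v := fun h => hv (h ▸ hw)
      obtain ⟨c, hc, hwc, _⟩ := hleaf w hwu hwv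
      rcases hc with rfl | rfl
      · exact absurd (hS.1 c hu w hw x hx hwc.symm hux) hwx
      · exact Or.inr (Or.inr ⟨hwu, hwv, hwc⟩)
    · rintro (rfl | rfl | ⟨hwu, hwv, hwadj⟩)
      · exact hu
      · exact hx
      · apply mem_of_no_neighbor hS
        intro s hs hsadj
        obtain ⟨c, hc, hwc, huniq⟩ := hleaf w hwu hwv
        have hcv : c = v := (huniq v hwadj).symm
        rw [huniq s hsadj, hcv] at hs
        exact hv hs
  -- symmetric version
  have hE' : ∀ S ∈ M, v ∈ S → u ∉ S → ∀ y ∈ S, T.Adj v y →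
      ∀ w : V, w ∈ S ↔ (w = v ∨ w = y ∨ (w ≠ u ∧ w ≠ v ∧ T.Adj w u)) := by
    intro S hS hv hu y hy hvy w
    constructor
    · intro hw
      by_cases hwv : w = v
      · exact Or.inl hwv
      by_cases hwy : w = y
      · exact Or.inr (Or.inl hwy)
      have hwu : w ≠ u := fun h => hu (h ▸ hw)
      obtain ⟨c, hc, hwc, _⟩ := hleaf w hwu hwv
      rcases hc with rfl | rfl
      · exact Or.inr (Or.inr ⟨hwu, hwv, hwc⟩)
      · exact absurd (hS.1 c hv w hw y hy hwc.symm hvy) hwy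
    · rintro (rfl | rfl | ⟨hwu, hwv, hwadj⟩)
      · exact hv
      · exact hy
      · apply mem_of_no_neighbor hS
        intro s hs hsadj
        obtain ⟨c, hc, hwc, huniq⟩ := hleaf w hwu hwv
        have hcu : c = u := (huniq u hwadj).symm
        rw [huniq s hsadj, hcu] at hs
        exact hu hs
  -- u in S, v not, no neighbor of u in S : impossible
  have hF : ∀ S ∈ M, u ∈ S → v ∉ S → (∀ x ∈ S, ¬T.Adj u x) → False := by
    intro S hS hu hv hno
    rcases hor with ⟨⟨x₀, hux₀, hx₀v⟩, _⟩ | hall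
    · have hx₀u : x₀ ≠ u := fun h => T.loopless.irrefl u (h ▸ hux₀)
      obtain ⟨c, hc, hwc, huniq⟩ := hleaf x₀ hx₀u hx₀v
      have hcu : c = u := (huniq u hux₀.symm).symm
      have hx₀S : x₀ ∈ S := by
        apply mem_of_unique_neighbor hS hu (fun t ht => (huniq t ht).trans hcu)
        intro s hs hadj
        exact hno s hs hadj
      exact hno x₀ hx₀S hux₀
    · apply hv
      apply mem_of_unique_neighbor hS hu (z := u)
      · intro t ht
        rcases hall t with rfl | rfl
        · rfl
        · exact absurd ht (T.loopless.irrefl t)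
      · intro s hs hadj
        exact hno s hs hadj
  have hF' : ∀ S ∈ M, v ∈ S → u ∉ S → (∀ y ∈ S, ¬T.Adj v y) → False := by
    intro S hS hv hu hno
    rcases hor with ⟨_, ⟨y₀, hvy₀, hy₀u⟩⟩ | hall
    · have hy₀v : y₀ ≠ v := fun h => T.loopless.irrefl v (h ▸ hvy₀)
      obtain ⟨c, hc, hwc, huniq⟩ := hleaf y₀ hy₀u hy₀v
      have hcv : c = v := (huniq v hvy₀.symm).symm
      have hy₀S : y₀ ∈ S := by
        apply mem_of_unique_neighbor hS hv (fun t ht => (huniq t ht).trans hcv)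
        intro s hs hadj
        exact hno s hs hadj
      exact hno y₀ hy₀S hvy₀
    · apply hu
      apply mem_of_unique_neighbor hS hv (z := v)
      · intro t ht
        rcases hall t with rfl | rfl
        · exact absurd ht (T.loopless.irrefl t)
        · rfl
      · intro s hs hadj
        exact hno s hs hadj
  -- neither center in S : S is the set of leaves
  have hG : ∀ S ∈ M, u ∉ S → v ∉ S → ∀ w : V, w ∈ S ↔ (w ≠ u ∧ w ≠ v) := by
    intro S hS hu hv w
    constructor
    · intro hw
      exact ⟨fun h => hu (h ▸ hw), fun h => hv (h ▸ hw)⟩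
    · rintro ⟨hwu, hwv⟩
      apply mem_of_no_neighbor hS
      intro s hs hsadj
      obtain ⟨c, hc, hwc, huniq⟩ := hleaf w hwu hwv
      rw [huniq s hsadj] at hs
      rcases hc with rfl | rfl
      · exact hu hs
      · exact hv hs
  set f : Finset V → V := fun S =>
    if u ∈ S then
      (if v ∈ S then u else (if h : ∃ x, x ∈ S ∧ T.Adj u x then h.choose else v))
    else
      (if v ∈ S then (if h : ∃ y, y ∈ S ∧ T.Adj v y then h.choose else u) else v) with hf
  -- no two leaves x (adj to u) and y (adj to v) coincide
  have hxy : ∀ x, T.Adj u x → T.Adj v x → False := by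
    intro x hux hvx
    have hxu : x ≠ u := fun h => T.loopless.irrefl u (h ▸ hux)
    have hxv : x ≠ v := fun h => T.loopless.irrefl v (h ▸ hvx)
    obtain ⟨c, hc, hwc, huniq⟩ := hleaf x hxu hxv
    have h1 : u = c := huniq u hux.symm
    have h2 : v = c := huniq v hvx.symm
    exact huv (h1.trans h2.symm)
  have hinj : Set.InjOn f M := by
    intro S hS S' hS' heq
    simp only [hf] at heq
    by_cases h1 : u ∈ S <;> by_cases h2 : v ∈ S <;>
      by_cases h3 : u ∈ S' <;> by_cases h4 : v ∈ S'
    -- 1 TT/TT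
    · rw [hD S hS h1 h2, hD S' hS' h3 h4]
    -- 2 TT/TF
    · rw [if_pos h1, if_pos h2, if_pos h3, if_neg h4] at heq
      by_cases e2 : ∃ x, x ∈ S' ∧ T.Adj u x
      · rw [dif_pos e2] at heq
        exact absurd heq e2.choose_spec.2.ne
      · rw [dif_neg e2] at heq
        exact absurd heq huv
    -- 3 TT/FT
    · rw [if_pos h1, if_pos h2, if_neg h3, if_pos h4] at heq
      by_cases e2 : ∃ y, y ∈ S' ∧ T.Adj v y
      · rw [dif_pos e2] at heq
        have hy := e2.choose_spec.1
        rw [← heq] at hy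
        exact absurd hy h3
      · push_neg at e2
        exact ((hF' S' hS' h4 h3) fun s hs => e2 s hs).elim
    -- 4 TT/FF
    · rw [if_pos h1, if_pos h2, if_neg h3, if_neg h4] at heq
      exact absurd heq huv
    -- 5 TF/TT
    · rw [if_pos h1, if_neg h2, if_pos h3, if_pos h4] at heq
      by_cases e1 : ∃ x, x ∈ S ∧ T.Adj u x
      · rw [dif_pos e1] at heq
        exact absurd heq.symm e1.choose_spec.2.ne
      · rw [dif_neg e1] at heq
        exact absurd heq.symm huv
    -- 6 TF/TF
    · rw [if_pos h1, if_neg h2, if_pos h3, if_neg h4] at heq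
      by_cases e1 : ∃ x, x ∈ S ∧ T.Adj u x
      · by_cases e2 : ∃ x, x ∈ S' ∧ T.Adj u x
        · rw [dif_pos e1, dif_pos e2] at heq
          refine Finset.ext fun w => ?_
          rw [hE S hS h1 h2 _ e1.choose_spec.1 e1.choose_spec.2 w,
            hE S' hS' h3 h4 _ e2.choose_spec.1 e2.choose_spec.2 w, heq]
        · push_neg at e2
          exact ((hF S' hS' h3 h4) fun s hs => e2 s hs).elim
      · push_neg at e1
        exact ((hF S hS h1 h2) fun s hs => e1 s hs).elim
    -- 7 TF/FT
    · rw [if_pos h1, if_neg h2, if_neg h3, if_pos h4] at heq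
      by_cases e1 : ∃ x, x ∈ S ∧ T.Adj u x
      · by_cases e2 : ∃ y, y ∈ S' ∧ T.Adj v y
        · rw [dif_pos e1, dif_pos e2] at heq
          have hvy := e2.choose_spec.2
          rw [← heq] at hvy
          exact (hxy _ e1.choose_spec.2 hvy).elim
        · push_neg at e2
          exact ((hF' S' hS' h4 h3) fun s hs => e2 s hs).elim
      · push_neg at e1
        exact ((hF S hS h1 h2) fun s hs => e1 s hs).elim
    -- 8 TF/FF
    · rw [if_pos h1, if_neg h2, if_neg h3, if_neg h4] at heq
      by_cases e1 : ∃ x, x ∈ S ∧ T.Adj u x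
      · rw [dif_pos e1] at heq
        have hx := e1.choose_spec.1
        rw [heq] at hx
        exact absurd hx h2
      · push_neg at e1
        exact ((hF S hS h1 h2) fun s hs => e1 s hs).elim
    -- 9 FT/TT
    · rw [if_neg h1, if_pos h2, if_pos h3, if_pos h4] at heq
      by_cases e1 : ∃ y, y ∈ S ∧ T.Adj v y
      · rw [dif_pos e1] at heq
        have hy := e1.choose_spec.1
        rw [heq] at hy
        exact absurd hy h1
      · push_neg at e1
        exact ((hF' S hS h2 h1) fun s hs => e1 s hs).elim
    -- 10 FT/TF
    · rw [if_neg h1, if_pos h2, if_pos h3, if_neg h4] at heq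
      by_cases e1 : ∃ y, y ∈ S ∧ T.Adj v y
      · by_cases e2 : ∃ x, x ∈ S' ∧ T.Adj u x
        · rw [dif_pos e1, dif_pos e2] at heq
          have hvy := e1.choose_spec.2
          rw [heq] at hvy
          exact (hxy _ e2.choose_spec.2 hvy).elim
        · push_neg at e2
          exact ((hF S' hS' h3 h4) fun s hs => e2 s hs).elim
      · push_neg at e1
        exact ((hF' S hS h2 h1) fun s hs => e1 s hs).elim
    -- 11 FT/FT
    · rw [if_neg h1, if_pos h2, if_neg h3, if_pos h4] at heq
      by_cases e1 : ∃ y, y ∈ S ∧ T.Adj v y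
      · by_cases e2 : ∃ y, y ∈ S' ∧ T.Adj v y
        · rw [dif_pos e1, dif_pos e2] at heq
          refine Finset.ext fun w => ?_
          rw [hE' S hS h2 h1 _ e1.choose_spec.1 e1.choose_spec.2 w,
            hE' S' hS' h4 h3 _ e2.choose_spec.1 e2.choose_spec.2 w, heq]
        · push_neg at e2
          exact ((hF' S' hS' h4 h3) fun s hs => e2 s hs).elim
      · push_neg at e1
        exact ((hF' S hS h2 h1) fun s hs => e1 s hs).elim
    -- 12 FT/FF
    · rw [if_neg h1, if_pos h2, if_neg h3, if_neg h4] at heq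
      by_cases e1 : ∃ y, y ∈ S ∧ T.Adj v y
      · rw [dif_pos e1] at heq
        exact absurd heq.symm e1.choose_spec.2.ne
      · push_neg at e1
        exact ((hF' S hS h2 h1) fun s hs => e1 s hs).elim
    -- 13 FF/TT
    · rw [if_neg h1, if_neg h2, if_pos h3, if_pos h4] at heq
      exact absurd heq.symm huv
    -- 14 FF/TF
    · rw [if_neg h1, if_neg h2, if_pos h3, if_neg h4] at heq
      by_cases e2 : ∃ x, x ∈ S' ∧ T.Adj u x
      · rw [dif_pos e2] at heq
        have hx := e2.choose_spec.1
        rw [← heq] at hx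
        exact absurd hx h4
      · push_neg at e2
        exact ((hF S' hS' h3 h4) fun s hs => e2 s hs).elim
    -- 15 FF/FT
    · rw [if_neg h1, if_neg h2, if_neg h3, if_pos h4] at heq
      by_cases e2 : ∃ y, y ∈ S' ∧ T.Adj v y
      · rw [dif_pos e2] at heq
        exact absurd heq e2.choose_spec.2.ne
      · push_neg at e2
        exact ((hF' S' hS' h4 h3) fun s hs => e2 s hs).elim
    -- 16 FF/FF
    · exact Finset.ext fun w => (hG S hS h1 h2 w).trans (hG S' hS' h3 h4 w).symm
  have hcard := Set.ncard_le_ncard_of_injOn f (fun S _ => Set.mem_univ (f S)) hinj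
    Set.finite_univ
  rwa [Set.ncard_univ, Nat.card_eq_fintype_card] at hcard

end Aux

/-- a tree of diameter at most 3 has at most `n` maximal
dissociation sets. -/
theorem phi_le_card_of_small_diam {V : Type*} [Fintype V] (T : SimpleGraph V)
    (hT : T.IsTree) (hdiam : T.diam ≤ 3) :
    T.phi ≤ Fintype.card V := by
  classical
  have hconn := hT.isConnected
  have : Nonempty V := hconn.nonempty
  have hne : T.ediam ≠ ⊤ := by
    obtain ⟨a, b, hab⟩ := SimpleGraph.exists_edist_eq_ediam_of_finite (G := T)
    rw [← hab]
    exact SimpleGraph.edist_ne_top_iff_reachable.mpr (hconn.preconnected a b)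
  have hd : ∀ a b : V, T.dist a b ≤ 3 :=
    fun a b => le_trans (SimpleGraph.dist_le_diam hne) hdiam
  rcases classify hT hd with ⟨u, hstar⟩ | ⟨u, v, hadj, hleaf, hor⟩
  · exact star_bound hstar
  · exact dstar_bound hadj hleaf hor
end
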